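/- Let u > a↓_k, m = |{i : a_i ≥ u}|, and let G_r(u) be the unique l < u with g_r(u, l) = 0. For any multiset v of entries of a satisfying {a_i : G_r(u) ≤ a_i < u} ⊆ v ⊆ {a_i : a_i < u} and |v| > k − m, the quantity ρ = (∑_{a∈v} a − (k − m) u)/(|v| − (k − m)) satisfies ρ ≤ G_r(u). -/
import Mathlib


open Finset

/-- The entries of `a` rearranged in nonincreasing order. -/
noncomputable def sortDesc (n : ℕ) (a : Fin n → ℝ) : Fin n → ℝ :=
  fun i => a (Tuple.sort a i.rev)

/-- The sum of the `k` largest entries of `a`. -/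
noncomputable def topKSum (n k : ℕ) (a : Fin n → ℝ) : ℝ :=
  ∑ i : Fin n, if (i : ℕ) < k then sortDesc n a i else 0
/-- The relaxed function `g_r(u, l)`. -/
noncomputable def grfun (n k : ℕ) (a : Fin n → ℝ) (u l : ℝ) : ℝ :=
  (∑ i : Fin n, max (a i - u) 0) - (∑ i : Fin n, max (a i - l) 0) + k * (u - l)

/-- Lower-bound property: for any multiset `v` of entries of `a` sandwiched between
`{a_i : G_r(u) ≤ a_i < u}` and `{a_i : a_i < u}`, with `|v| > k − m`, the ratio
`ρ = (∑_{a∈v} a − (k − m)u)/(|v| − (k − m))` satisfies `ρ ≤ G_r(u)`. -/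
theorem stmt14 (n k : ℕ) (hn : 2 ≤ n) (hk1 : 1 ≤ k) (hk : k < n) (a : Fin n → ℝ)
    (u Gu : ℝ) (hu : sortDesc n a ⟨k - 1, by omega⟩ < u)
    (hGu : Gu < u) (hroot : grfun n k a u Gu = 0)
    (m : ℕ) (hm : m = (Finset.univ.filter fun i : Fin n => u ≤ a i).card)
    (v : Multiset ℝ)
    (hlow : (Finset.univ.val.map a).filter (fun x => Gu ≤ x ∧ x < u) ≤ v)
    (hhigh : v ≤ (Finset.univ.val.map a).filter (fun x => x < u))
    (hcard : (k : ℝ) - (m : ℝ) < (Multiset.card v : ℝ)) :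
    (v.sum - ((k : ℝ) - (m : ℝ)) * u) / ((Multiset.card v : ℝ) - ((k : ℝ) - (m : ℝ)))
      ≤ Gu := by
  classical
  set M : Multiset ℝ := Finset.univ.val.map a with hM
  set W : Multiset ℝ := M.filter (fun x => Gu ≤ x ∧ x < u) with hWdef
  set S : Finset (Fin n) := Finset.univ.filter (fun i => Gu ≤ a i ∧ a i < u) with hS
  have hWS : W = S.val.map a := by
    rw [hWdef, hM, Multiset.filter_map, hS, Finset.filter_val]
    rfl
  -- key identity from hroot
  have h1 : ∑ i : Fin n, (max (a i - Gu) 0 - max (a i - u) 0) = (k : ℝ) * (u - Gu) := by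
    unfold grfun at hroot
    rw [Finset.sum_sub_distrib]
    linarith
  have h2 : ∀ i : Fin n, max (a i - Gu) 0 - max (a i - u) 0 =
      (if u ≤ a i then u - Gu else 0) + (if Gu ≤ a i ∧ a i < u then a i - Gu else 0) := by
    intro i
    rcases le_or_gt u (a i) with h | h
    · rw [max_eq_left (by linarith), max_eq_left (by linarith),
        if_pos h, if_neg (by push_neg; intro _; linarith)]
      ring
    · rcases le_or_gt Gu (a i) with h' | h'
      · rw [max_eq_left (by linarith), max_eq_right (by linarith),
          if_neg (not_le.mpr h), if_pos ⟨h', h⟩]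
        ring
      · rw [max_eq_right (by linarith), max_eq_right (by linarith),
          if_neg (not_le.mpr h), if_neg (by push_neg; intro hc; linarith)]
        ring
  rw [Finset.sum_congr rfl (fun i _ => h2 i), Finset.sum_add_distrib,
    ← Finset.sum_filter, ← Finset.sum_filter, Finset.sum_const, ← hm, ← hS] at h1
  have key : ∑ i ∈ S, (a i - Gu) = ((k : ℝ) - m) * (u - Gu) := by
    have : (m : ℝ) * (u - Gu) + ∑ i ∈ S, (a i - Gu) = (k : ℝ) * (u - Gu) := by
      rw [← h1]; simp [nsmul_eq_mul]
    linarith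
  have hWsum : W.sum - Gu * (Multiset.card W : ℝ) = ((k : ℝ) - m) * (u - Gu) := by
    rw [hWS, Multiset.card_map, ← Finset.sum_eq_multiset_sum, ← key,
      Finset.sum_sub_distrib, Finset.sum_const, Finset.card_def]
    simp [nsmul_eq_mul]
    ring
  -- decompose v
  set D : Multiset ℝ := v - W with hD
  have hvWD : v = W + D := by
    rw [hD, add_comm]
    exact (tsub_add_cancel_of_le hlow).symm
  have hDle : ∀ x ∈ D, x ≤ Gu := by
    intro x hx
    by_contra hc
    push_neg at hc
    have hxv : x ∈ v := Multiset.mem_of_le tsub_le_self hx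
    have hxu : x < u := by
      have := Multiset.mem_of_le hhigh hxv
      exact (Multiset.mem_filter.mp this).2
    have hcW : Multiset.count x W = Multiset.count x M := by
      rw [hWdef, Multiset.count_filter, if_pos ⟨le_of_lt hc, hxu⟩]
    have hcv : Multiset.count x v ≤ Multiset.count x M := by
      have h3 := Multiset.le_iff_count.mp hhigh x
      calc Multiset.count x v ≤ _ := h3
        _ ≤ Multiset.count x M := Multiset.count_le_of_le x (Multiset.filter_le _ _)
    have : Multiset.count x D = 0 := by
      rw [hD, Multiset.count_sub, hcW]
      omega
    exact absurd (Multiset.count_pos.mpr hx) (by omega)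
  have hDsum : D.sum ≤ (Multiset.card D : ℝ) * Gu := by
    have := Multiset.sum_le_card_nsmul D Gu hDle
    simpa [nsmul_eq_mul] using this
  have hsum : v.sum = W.sum + D.sum := by rw [hvWD, Multiset.sum_add]
  have hcardv : (Multiset.card v : ℝ) = Multiset.card W + Multiset.card D := by
    rw [hvWD, Multiset.card_add]; push_cast; ring
  rw [div_le_iff₀ (by linarith), hsum, hcardv]
  nlinarith [hWsum, hDsum]
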